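/- arXiv:1907.03917 — 2 statements merged into one kernel-verified Lean document; each statement's English description precedes it below -/
import Mathlib

section
/- Any two metrics g₁ and g₂ on the interior of M compatible with the same Lie structure at infinity (M, 𝒱) are bi-Lipschitz equivalent: there exists a constant C > 0 such that C⁻¹ g₂(X,X) ≤ g₁(X,X) ≤ C g₂(X,X) for all tangent vectors X on the interior of M. Consequently, the associated distance functions satisfy C⁻¹ d₂ ≤ d₁ ≤ C d₂. -/
/-!
Both metrics are fiberwise quadratic, so comparing them reduces to comparing them on unit
vectors. In a local trivialization around `x` the unit sphere of the model fiber is compact, so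
`g₁ < c * g₂` holds on it at `x` for some `c`, and by the tube lemma also over a neighbourhood
of `x`. Compactness of the base turns these local constants into a global one, and applying
this in both directions gives the two-sided bound.
-/

open Bundle Filter Topology Metric Set

section Homogeneous

variable {V : Type*} [AddCommGroup V] [Module ℝ V]

lemma apply_smul_eq_sq_mul_of_eq_apply_self {g : V → ℝ} {B : V →ₗ[ℝ] V →ₗ[ℝ] ℝ}
    (hB : ∀ v, g v = B v v) (t : ℝ) (v : V) : g (t • v) = t ^ 2 * g v := by
  simp only [hB, map_smul, LinearMap.smul_apply, smul_eq_mul]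
  ring

lemma apply_zero_of_smul_eq_sq_mul {g : V → ℝ} (hg : ∀ (t : ℝ) v, g (t • v) = t ^ 2 * g v) :
    g 0 = 0 := by
  simpa using hg 0 0

lemma apply_nonneg_of_smul_eq_sq_mul {g : V → ℝ} (hg : ∀ (t : ℝ) v, g (t • v) = t ^ 2 * g v)
    (hpos : ∀ v, v ≠ 0 → 0 < g v) (v : V) : 0 ≤ g v := by
  rcases eq_or_ne v 0 with rfl | hv
  · exact (apply_zero_of_smul_eq_sq_mul hg).ge
  · exact (hpos v hv).le

lemma le_mul_of_forall_mem_sphere {F : Type*} [NormedAddCommGroup F] [NormedSpace ℝ F]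
    {g₁ g₂ : F → ℝ} (hg₁ : ∀ (t : ℝ) w, g₁ (t • w) = t ^ 2 * g₁ w)
    (hg₂ : ∀ (t : ℝ) w, g₂ (t • w) = t ^ 2 * g₂ w) {c : ℝ}
    (h : ∀ w ∈ sphere (0 : F) 1, g₁ w ≤ c * g₂ w) (w : F) : g₁ w ≤ c * g₂ w := by
  rcases eq_or_ne w 0 with rfl | hw
  · simp [apply_zero_of_smul_eq_sq_mul hg₁, apply_zero_of_smul_eq_sq_mul hg₂]
  rw [← smul_inv_smul₀ (norm_ne_zero_iff.2 hw) w, hg₁, hg₂, mul_left_comm]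
  exact mul_le_mul_of_nonneg_left (h _ (by simp [norm_smul, hw])) (sq_nonneg _)

end Homogeneous

lemma eventually_forall_le_mul_of_prod {X F : Type*} [TopologicalSpace X] [NormedAddCommGroup F]
    [NormedSpace ℝ F] [FiniteDimensional ℝ F] {f₁ f₂ : X × F → ℝ} {x : X}
    (hc₁ : ∀ w, ContinuousAt f₁ (x, w)) (hc₂ : ∀ w, ContinuousAt f₂ (x, w))
    (hf₁ : ∀ᶠ y in 𝓝 x, ∀ (t : ℝ) w, f₁ (y, t • w) = t ^ 2 * f₁ (y, w))
    (hf₂ : ∀ᶠ y in 𝓝 x, ∀ (t : ℝ) w, f₂ (y, t • w) = t ^ 2 * f₂ (y, w))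
    (hpos : ∀ w, w ≠ 0 → 0 < f₂ (x, w)) :
    ∃ c, ∀ᶠ y in 𝓝 x, ∀ w, f₁ (y, w) ≤ c * f₂ (y, w) := by
  have hS : IsCompact (sphere (0 : F) 1) := isCompact_sphere 0 1
  have hposS : ∀ w ∈ sphere (0 : F) 1, 0 < f₂ (x, w) := fun w hw =>
    hpos w (ne_zero_of_mem_sphere one_ne_zero ⟨w, hw⟩)
  have hslice : ∀ (f : X × F → ℝ), (∀ w, ContinuousAt f (x, w)) → Continuous fun w => f (x, w) :=
    fun f hf => continuous_iff_continuousAt.2 fun w =>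
      (hf w).comp (Continuous.prodMk_right x).continuousAt
  obtain ⟨C, hC⟩ := hS.exists_bound_of_continuousOn
    ((hslice f₁ hc₁).continuousOn.div (hslice f₂ hc₂).continuousOn fun w hw => (hposS w hw).ne')
  have hlt : ∀ w ∈ sphere (0 : F) 1, f₁ (x, w) < (C + 1) * f₂ (x, w) := by
    intro w hw
    have hle : f₁ (x, w) / f₂ (x, w) ≤ C := (le_abs_self _).trans (hC w hw)
    rw [div_le_iff₀ (hposS w hw)] at hle
    linarith [hposS w hw]
  have hnear : ∀ᶠ y in 𝓝 x, ∀ w ∈ sphere (0 : F) 1, f₁ (y, w) < (C + 1) * f₂ (y, w) :=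
    hS.eventually_forall_of_forall_eventually fun w hw =>
      (hc₁ w).eventually_lt ((hc₂ w).const_mul (C + 1)) (hlt w hw)
  refine ⟨C + 1, ?_⟩
  filter_upwards [hnear, hf₁, hf₂] with y hy hy₁ hy₂
  exact le_mul_of_forall_mem_sphere hy₁ hy₂ fun w hw => (hy w hw).le

lemma exists_pos_forall_le_mul_of_locally {M : Type*} [TopologicalSpace M] [CompactSpace M]
    {E : M → Type*} {g₁ g₂ : ∀ x, E x → ℝ} (hg₂ : ∀ x v, 0 ≤ g₂ x v)
    (hloc : ∀ x, ∃ c, ∀ᶠ y in 𝓝 x, ∀ v : E y, g₁ y v ≤ c * g₂ y v) :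
    ∃ C, 0 < C ∧ ∀ x v, g₁ x v ≤ C * g₂ x v := by
  have mono : ∀ {c d : ℝ}, c ≤ d → ∀ x v, c * g₂ x v ≤ d * g₂ x v := fun hcd x v =>
    mul_le_mul_of_nonneg_right hcd (hg₂ x v)
  obtain ⟨C, hC⟩ : ∃ C, ∀ x ∈ (univ : Set M), ∀ v, g₁ x v ≤ C * g₂ x v := by
    refine isCompact_univ.induction_on ⟨0, by simp⟩ ?_ ?_ ?_
    · rintro s t hst ⟨C, hC⟩
      exact ⟨C, fun x hx => hC x (hst hx)⟩
    · rintro s t ⟨C, hC⟩ ⟨D, hD⟩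
      refine ⟨max C D, fun x hx v => ?_⟩
      rcases hx with hx | hx
      · exact (hC x hx v).trans (mono (le_max_left _ _) x v)
      · exact (hD x hx v).trans (mono (le_max_right _ _) x v)
    · intro x _
      obtain ⟨c, hc⟩ := hloc x
      exact ⟨_, mem_nhdsWithin_of_mem_nhds hc, c, fun y hy => hy⟩
  exact ⟨max C 1, one_pos.trans_le (le_max_right _ _), fun x v =>
    (hC x trivial v).trans (mono (le_max_left _ _) x v)⟩

section Bundle

variable {M : Type*} [TopologicalSpace M]
    {F : Type*} [NormedAddCommGroup F] [NormedSpace ℝ F] [FiniteDimensional ℝ F]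
    {E : M → Type*} [∀ x, AddCommGroup (E x)] [∀ x, Module ℝ (E x)]
    [∀ x, TopologicalSpace (E x)] [TopologicalSpace (TotalSpace F E)]
    [FiberBundle F E] [VectorBundle ℝ F E]
    {g₁ g₂ : ∀ x, E x → ℝ}

lemma eventually_forall_le_mul
    (hc₁ : Continuous fun p : TotalSpace F E => g₁ p.proj p.snd)
    (hc₂ : Continuous fun p : TotalSpace F E => g₂ p.proj p.snd)
    (hg₁ : ∀ x (t : ℝ) (v : E x), g₁ x (t • v) = t ^ 2 * g₁ x v)
    (hg₂ : ∀ x (t : ℝ) (v : E x), g₂ x (t • v) = t ^ 2 * g₂ x v)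
    (hp₂ : ∀ x (v : E x), v ≠ 0 → 0 < g₂ x v) (x : M) :
    ∃ c, ∀ᶠ y in 𝓝 x, ∀ v : E y, g₁ y v ≤ c * g₂ y v := by
  set e := trivializationAt F E x
  have hx : x ∈ e.baseSet := mem_baseSet_trivializationAt F E x
  have hbase : e.baseSet ∈ 𝓝 x := e.open_baseSet.mem_nhds hx
  have hsymm (w : F) :
      ContinuousAt (fun z : M × F => TotalSpace.mk' F z.1 (e.symm z.1 z.2)) (x, w) :=
    e.continuousOn_symm.continuousAt (prod_mem_nhds hbase univ_mem)
  have hlin : ∀ y ∈ e.baseSet, ∀ (t : ℝ) w, e.symm y (t • w) = t • e.symm y w := by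
    intro y hy t w
    simp only [← e.symmL_apply (R := ℝ) hy, map_smul]
  have hne (w : F) (hw : w ≠ 0) : e.symm x w ≠ 0 := by
    rw [← e.symmL_apply (R := ℝ) hx, ← e.symm_continuousLinearEquivAt_eq (R := ℝ) hx]
    exact (e.continuousLinearEquivAt ℝ x hx).symm.map_ne_zero_iff.2 hw
  obtain ⟨c, hc⟩ := eventually_forall_le_mul_of_prod
    (f₁ := fun z => g₁ z.1 (e.symm z.1 z.2)) (f₂ := fun z => g₂ z.1 (e.symm z.1 z.2))
    (fun w => hc₁.continuousAt.comp (hsymm w)) (fun w => hc₂.continuousAt.comp (hsymm w))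
    (eventually_of_mem hbase fun y hy t w => by simp only [hlin y hy, hg₁])
    (eventually_of_mem hbase fun y hy t w => by simp only [hlin y hy, hg₂])
    (fun w hw => hp₂ x _ (hne w hw))
  refine ⟨c, ?_⟩
  filter_upwards [hc, hbase] with y hy hyb v
  simpa only [e.symm_apply_apply_mk hyb] using hy (e ⟨y, v⟩).2

lemma exists_pos_forall_le_mul [CompactSpace M]
    (hc₁ : Continuous fun p : TotalSpace F E => g₁ p.proj p.snd)
    (hc₂ : Continuous fun p : TotalSpace F E => g₂ p.proj p.snd)
    (hg₁ : ∀ x (t : ℝ) (v : E x), g₁ x (t • v) = t ^ 2 * g₁ x v)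
    (hg₂ : ∀ x (t : ℝ) (v : E x), g₂ x (t • v) = t ^ 2 * g₂ x v)
    (hp₂ : ∀ x (v : E x), v ≠ 0 → 0 < g₂ x v) :
    ∃ C, 0 < C ∧ ∀ x (v : E x), g₁ x v ≤ C * g₂ x v :=
  exists_pos_forall_le_mul_of_locally
    (fun x => apply_nonneg_of_smul_eq_sq_mul (hg₂ x) (hp₂ x))
    (eventually_forall_le_mul hc₁ hc₂ hg₁ hg₂ hp₂)

end Bundle

/-- Any two metrics compatible with the same Lie structure at
infinity `(M, 𝒱)` are bi-Lipschitz equivalent.  Formalized as the key fact used in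
the paper: a compatible metric is the restriction to the interior of a fiberwise
inner product (a positive definite quadratic form) on the bundle `^𝒱TM` over the
compact manifold with corners `M`, and any two continuous fiberwise positive
definite quadratic forms `g₁, g₂` on a vector bundle `E` over a compact base are
uniformly equivalent: there is `C > 0` with
`C⁻¹ g₂(X,X) ≤ g₁(X,X) ≤ C g₂(X,X)` for all `X`. -/
theorem compatible_metrics_biLipschitz
    {M : Type*} [TopologicalSpace M] [CompactSpace M]
    {F : Type*} [NormedAddCommGroup F] [NormedSpace ℝ F] [FiniteDimensional ℝ F]
    {E : M → Type*} [∀ x, AddCommGroup (E x)] [∀ x, Module ℝ (E x)]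
    [∀ x, TopologicalSpace (E x)] [TopologicalSpace (TotalSpace F E)]
    [FiberBundle F E] [VectorBundle ℝ F E]
    (g₁ g₂ : ∀ x, E x → ℝ)
    (hc₁ : Continuous fun p : TotalSpace F E => g₁ p.proj p.snd)
    (hc₂ : Continuous fun p : TotalSpace F E => g₂ p.proj p.snd)
    (hq₁ : ∀ x, ∃ B : E x →ₗ[ℝ] E x →ₗ[ℝ] ℝ, (∀ v w, B v w = B w v) ∧ ∀ v, g₁ x v = B v v)
    (hq₂ : ∀ x, ∃ B : E x →ₗ[ℝ] E x →ₗ[ℝ] ℝ, (∀ v w, B v w = B w v) ∧ ∀ v, g₂ x v = B v v)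
    (hp₁ : ∀ x (v : E x), v ≠ 0 → 0 < g₁ x v)
    (hp₂ : ∀ x (v : E x), v ≠ 0 → 0 < g₂ x v) :
    ∃ C : ℝ, 0 < C ∧ ∀ x (v : E x), C⁻¹ * g₂ x v ≤ g₁ x v ∧ g₁ x v ≤ C * g₂ x v := by
  have hg₁ : ∀ x (t : ℝ) (v : E x), g₁ x (t • v) = t ^ 2 * g₁ x v := fun x =>
    apply_smul_eq_sq_mul_of_eq_apply_self (hq₁ x).choose_spec.2
  have hg₂ : ∀ x (t : ℝ) (v : E x), g₂ x (t • v) = t ^ 2 * g₂ x v := fun x =>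
    apply_smul_eq_sq_mul_of_eq_apply_self (hq₂ x).choose_spec.2
  obtain ⟨C₁, hC₁, h₁₂⟩ := exists_pos_forall_le_mul hc₁ hc₂ hg₁ hg₂ hp₂
  obtain ⟨C₂, -, h₂₁⟩ := exists_pos_forall_le_mul hc₂ hc₁ hg₂ hg₁ hp₁
  have hC : 0 < max C₁ C₂ := lt_max_of_lt_left hC₁
  refine ⟨max C₁ C₂, hC, fun x v => ⟨?_, ?_⟩⟩
  · rw [inv_mul_le_iff₀ hC]
    exact (h₂₁ x v).trans (mul_le_mul_of_nonneg_right (le_max_right _ _)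
      (apply_nonneg_of_smul_eq_sq_mul (hg₁ x) (hp₁ x) v))
  · exact (h₁₂ x v).trans (mul_le_mul_of_nonneg_right (le_max_left _ _)
      (apply_nonneg_of_smul_eq_sq_mul (hg₂ x) (hp₂ x) v))
end

section
/- Let (M̊, g) be a Riemannian manifold with a Lie structure at infinity (M, 𝒱). Then the Levi-Civita connection of g, defined on vector fields of M̊, extends to a 𝒱-connection ∇: Γ(^𝒱TM) × Γ(^𝒱TM) → Γ(^𝒱TM), i.e. for X, Y ∈ Γ(^𝒱TM) the vector field ∇_X Y again extends to a section of ^𝒱TM, and this extension is torsion-free and compatible with the metric h on ^𝒱TM. -/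
/-!
The Koszul expression `koszul L h X Y Z`, built from the anchor, the bracket and `h` alone,
is `R`-linear in `Z` thanks to the Leibniz rule and the symmetry of `h`. Since `h` identifies `Γ`
with its dual and `2` is invertible, `h (∇_X Y) Z = ½ koszul L h X Y Z` defines `∇_X Y ∈ Γ`.
The connection axioms, torsion-freeness and metric compatibility of `∇` are then identities
satisfied by the Koszul expression.
-/

/-- A Lie algebroid, formalized algebraically: `R` plays the role of `C^∞(M)`,
vector fields are `ℝ`-derivations of `R`, `Γ` is the `R`-module of global sections
of `A → M` with a Lie bracket, and the anchor satisfies the Leibniz rule.  For a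
Lie structure at infinity `(M, 𝒱)`, take `Γ = Γ(^𝒱TM) ≅ 𝒱`. -/
structure LieAlgebroid (R : Type*) [CommRing R] [Algebra ℝ R]
    (Γ : Type*) [LieRing Γ] [Module R Γ] where
  anchor : Γ →+ Derivation ℝ R R
  leibniz : ∀ (u v : Γ) (f : R), ⁅u, f • v⁆ = f • ⁅u, v⁆ + ((anchor u) f) • v

namespace LieAlgebroid

variable {R : Type*} [CommRing R] [Algebra ℝ R] {Γ : Type*} [LieRing Γ] [Module R Γ]

theorem smul_lie (L : LieAlgebroid R Γ) (f : R) (X Y : Γ) :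
    ⁅f • X, Y⁆ = f • ⁅X, Y⁆ - L.anchor Y f • X := by
  rw [← lie_skew, L.leibniz, neg_add, ← smul_neg, lie_skew, sub_eq_add_neg]

/-- Twice `h (∇_X Y) Z` for the Levi-Civita connection `∇` of `h`. -/
def koszul (L : LieAlgebroid R Γ) (h : Γ →ₗ[R] Γ →ₗ[R] R) (X Y Z : Γ) : R :=
  L.anchor X (h Y Z) + L.anchor Y (h Z X) - L.anchor Z (h X Y)
    + h ⁅X, Y⁆ Z - h ⁅Y, Z⁆ X + h ⁅Z, X⁆ Y

section Koszul

variable {L : LieAlgebroid R Γ} {h : Γ →ₗ[R] Γ →ₗ[R] R}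

theorem koszul_add_left (X X' Y Z : Γ) :
    koszul L h (X + X') Y Z = koszul L h X Y Z + koszul L h X' Y Z := by
  simp only [koszul, map_add, add_lie, lie_add, LinearMap.add_apply, Derivation.add_apply]
  ring

theorem koszul_add_middle (X Y Y' Z : Γ) :
    koszul L h X (Y + Y') Z = koszul L h X Y Z + koszul L h X Y' Z := by
  simp only [koszul, map_add, add_lie, lie_add, LinearMap.add_apply, Derivation.add_apply]
  ring

theorem koszul_add_right (X Y Z Z' : Γ) :
    koszul L h X Y (Z + Z') = koszul L h X Y Z + koszul L h X Y Z' := by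
  simp only [koszul, map_add, add_lie, lie_add, LinearMap.add_apply, Derivation.add_apply]
  ring

variable (hlin : ∀ (f : R) (X : Γ), L.anchor (f • X) = f • L.anchor X)
  (hsymm : ∀ X Y : Γ, h X Y = h Y X)
include hlin hsymm

theorem koszul_smul_left (f : R) (X Y Z : Γ) :
    koszul L h (f • X) Y Z = f * koszul L h X Y Z := by
  simp only [koszul, map_smul, L.leibniz, L.smul_lie, map_add, map_sub, hlin,
    LinearMap.smul_apply, LinearMap.add_apply, LinearMap.sub_apply,
    Derivation.leibniz, Derivation.smul_apply, smul_eq_mul]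
  rw [hsymm Z X, hsymm X Z, hsymm X Y]
  ring

theorem koszul_smul_middle (f : R) (X Y Z : Γ) :
    koszul L h X (f • Y) Z = f * koszul L h X Y Z + 2 * (L.anchor X f * h Y Z) := by
  simp only [koszul, map_smul, L.leibniz, L.smul_lie, map_add, map_sub, hlin,
    LinearMap.smul_apply, LinearMap.add_apply, LinearMap.sub_apply,
    Derivation.leibniz, Derivation.smul_apply, smul_eq_mul]
  rw [hsymm Z X, hsymm Y X]
  ring

theorem koszul_smul_right (f : R) (X Y Z : Γ) :
    koszul L h X Y (f • Z) = f * koszul L h X Y Z := by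
  simp only [koszul, map_smul, L.leibniz, L.smul_lie, map_add, map_sub, hlin,
    LinearMap.smul_apply, LinearMap.add_apply, LinearMap.sub_apply,
    Derivation.leibniz, Derivation.smul_apply, smul_eq_mul]
  rw [hsymm Z X, hsymm Z Y]
  ring

omit hlin

theorem koszul_sub_koszul_swap (X Y Z : Γ) :
    koszul L h X Y Z - koszul L h Y X Z = 2 * h ⁅X, Y⁆ Z := by
  simp only [koszul, ← lie_skew X Y, ← lie_skew Y Z, ← lie_skew X Z, map_neg,
    LinearMap.neg_apply]
  rw [hsymm Z Y, hsymm Z X, hsymm Y X]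
  ring

theorem koszul_add_koszul_swap (X Y Z : Γ) :
    koszul L h X Y Z + koszul L h X Z Y = 2 * L.anchor X (h Y Z) := by
  simp only [koszul, ← lie_skew X Y, ← lie_skew Y Z, ← lie_skew X Z, map_neg,
    LinearMap.neg_apply]
  rw [hsymm Z Y, hsymm Z X, hsymm Y X]
  ring

end Koszul

variable (L : LieAlgebroid R Γ) (h : Γ →ₗ[R] Γ →ₗ[R] R)
  (hlin : ∀ (f : R) (X : Γ), L.anchor (f • X) = f • L.anchor X)
  (hsymm : ∀ X Y : Γ, h X Y = h Y X)

def koszulForm (X Y : Γ) : Γ →ₗ[R] R where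
  toFun := koszul L h X Y
  map_add' := koszul_add_right X Y
  map_smul' f Z := koszul_smul_right hlin hsymm f X Y Z

variable [Invertible (2 : R)] (hnondeg : Function.Bijective h)

noncomputable def leviCivita (X Y : Γ) : Γ :=
  (LinearEquiv.ofBijective h hnondeg).symm (⅟(2 : R) • koszulForm L h hlin hsymm X Y)

local notation "∇" => leviCivita L h hlin hsymm hnondeg

theorem koszul_formula (X Y Z : Γ) : h (∇ X Y) Z = ⅟2 * koszul L h X Y Z := by
  have := (LinearEquiv.ofBijective h hnondeg).apply_symm_apply
    (⅟(2 : R) • koszulForm L h hlin hsymm X Y)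
  rw [LinearEquiv.ofBijective_apply] at this
  rw [leviCivita, this]
  rfl

variable {L h hlin hsymm hnondeg}

theorem leviCivita_add_left (X X' Y : Γ) : ∇ (X + X') Y = ∇ X Y + ∇ X' Y :=
  hnondeg.injective <| LinearMap.ext fun Z => by
    simp only [map_add, LinearMap.add_apply, koszul_formula, koszul_add_left, mul_add]

theorem leviCivita_smul_left (f : R) (X Y : Γ) : ∇ (f • X) Y = f • ∇ X Y :=
  hnondeg.injective <| LinearMap.ext fun Z => by
    simp only [map_smul, LinearMap.smul_apply, koszul_formula, koszul_smul_left hlin hsymm,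
      smul_eq_mul, mul_left_comm]

theorem leviCivita_add_right (X Y Y' : Γ) : ∇ X (Y + Y') = ∇ X Y + ∇ X Y' :=
  hnondeg.injective <| LinearMap.ext fun Z => by
    simp only [map_add, LinearMap.add_apply, koszul_formula, koszul_add_middle, mul_add]

theorem leviCivita_smul_right (X : Γ) (f : R) (Y : Γ) :
    ∇ X (f • Y) = f • ∇ X Y + L.anchor X f • Y :=
  hnondeg.injective <| LinearMap.ext fun Z => by
    rw [map_add, map_smul, map_smul, LinearMap.add_apply, LinearMap.smul_apply,
      LinearMap.smul_apply, koszul_formula, koszul_formula, koszul_smul_middle hlin hsymm,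
      mul_add, invOf_mul_cancel_left, smul_eq_mul, smul_eq_mul, mul_left_comm]

theorem leviCivita_sub_swap (X Y : Γ) : ∇ X Y - ∇ Y X = ⁅X, Y⁆ :=
  hnondeg.injective <| LinearMap.ext fun Z => by
    rw [map_sub, LinearMap.sub_apply, koszul_formula, koszul_formula, ← mul_sub,
      koszul_sub_koszul_swap hsymm, invOf_mul_cancel_left]

theorem anchor_apply_eq_leviCivita (X Y Z : Γ) :
    L.anchor X (h Y Z) = h (∇ X Y) Z + h Y (∇ X Z) := by
  rw [hsymm Y (∇ X Z), koszul_formula, koszul_formula, ← mul_add, koszul_add_koszul_swap hsymm,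
    invOf_mul_cancel_left]

end LieAlgebroid

theorem leviCivita_extends_general
    {R : Type*} [CommRing R] [Algebra ℝ R]
    {Γ : Type*} [LieRing Γ] [Module R Γ]
    (L : LieAlgebroid R Γ)
    (hlin : ∀ (f : R) (X : Γ), L.anchor (f • X) = f • L.anchor X)
    (h : Γ →ₗ[R] Γ →ₗ[R] R)
    (hsymm : ∀ X Y : Γ, h X Y = h Y X)
    (hnondeg : Function.Bijective fun X : Γ => h X) :
    ∃ nabla : Γ → Γ → Γ,
      (∀ X Y Z : Γ, nabla (X + Y) Z = nabla X Z + nabla Y Z) ∧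
      (∀ (f : R) (X Y : Γ), nabla (f • X) Y = f • nabla X Y) ∧
      (∀ X Y Z : Γ, nabla X (Y + Z) = nabla X Y + nabla X Z) ∧
      (∀ (X : Γ) (f : R) (Y : Γ), nabla X (f • Y) = f • nabla X Y + ((L.anchor X) f) • Y) ∧
      (∀ X Y : Γ, nabla X Y - nabla Y X = ⁅X, Y⁆) ∧
      (∀ X Y Z : Γ, (L.anchor X) (h Y Z) = h (nabla X Y) Z + h Y (nabla X Z))   := by
  let _ : Invertible (2 : R) :=
    map_ofNat (algebraMap ℝ R) 2 ▸ (invertibleTwo : Invertible (2 : ℝ)).map (algebraMap ℝ R)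
  exact ⟨LieAlgebroid.leviCivita L h hlin hsymm hnondeg, LieAlgebroid.leviCivita_add_left,
    LieAlgebroid.leviCivita_smul_left, LieAlgebroid.leviCivita_add_right,
    LieAlgebroid.leviCivita_smul_right, LieAlgebroid.leviCivita_sub_swap,
    LieAlgebroid.anchor_apply_eq_leviCivita⟩

/-- For a Riemannian manifold `(M̊, g)` with a Lie structure at
infinity `(M, 𝒱)`, the Levi-Civita connection extends to a `𝒱`-connection
`∇ : Γ(^𝒱TM) × Γ(^𝒱TM) → Γ(^𝒱TM)` which is torsion-free and compatible with the
metric `h` on `^𝒱TM`.  Here `h` is the (nondegenerate, symmetric) `R`-bilinear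
metric on the module `Γ` of sections of `^𝒱TM`, the anchor of the Lie algebroid
`^𝒱TM` is `R`-linear (`hlin`), and the conclusion asserts the existence of `∇`
satisfying the connection axioms, torsion-freeness `∇_X Y − ∇_Y X = [X,Y]` and
metric compatibility `X·h(Y,Z) = h(∇_X Y, Z) + h(Y, ∇_X Z)` (Koszul formula). -/
theorem leviCivita_extends
    {R : Type*} [CommRing R] [Algebra ℝ R]
    {Γ : Type*} [LieRing Γ] [Module R Γ] [Module ℝ Γ] [IsScalarTower ℝ R Γ]
    (L : LieAlgebroid R Γ)
    (hlin : ∀ (f : R) (X : Γ), L.anchor (f • X) = f • L.anchor X)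
    (h : Γ →ₗ[R] Γ →ₗ[R] R)
    (hsymm : ∀ X Y : Γ, h X Y = h Y X)
    (hnondeg : Function.Bijective fun X : Γ => h X) :
    ∃ nabla : Γ → Γ → Γ,
      (∀ X Y Z : Γ, nabla (X + Y) Z = nabla X Z + nabla Y Z) ∧
      (∀ (f : R) (X Y : Γ), nabla (f • X) Y = f • nabla X Y) ∧
      (∀ X Y Z : Γ, nabla X (Y + Z) = nabla X Y + nabla X Z) ∧
      (∀ (X : Γ) (f : R) (Y : Γ), nabla X (f • Y) = f • nabla X Y + ((L.anchor X) f) • Y) ∧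
      (∀ X Y : Γ, nabla X Y - nabla Y X = ⁅X, Y⁆) ∧
      (∀ X Y Z : Γ, (L.anchor X) (h Y Z) = h (nabla X Y) Z + h Y (nabla X Z)) :=
  leviCivita_extends_general L hlin h hsymm hnondeg
end
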